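/- Fix n ≥ 1 and 0 ≤ r ≤ n, and let F be the set of π ∈ 𝔅_n such that 0 < π_1 < π_2 < ⋯ < π_{n−r} (all of the first n−r entries are positive and increasing) and π_{n−r+1} < π_{n−r+2} < ⋯ < π_n (the last r entries are increasing). Then Σ_{π∈F} q^{inv_B(π)} = binom(n,r)_q · (1+q^n)(1+q^{n−1})⋯(1+q^{n−r+1}) = binom(n,r)_q · ∏_{i=0}^{r−1}(1+q^{n−i}). -/

import Mathlib

open Finset

/-- The hyperoctahedral group `𝔅_n`, encoded as (permutation of positions, signs):
the signed permutation sends `i+1` to `±(σ i + 1)`. -/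
abbrev BG (n : ℕ) := Equiv.Perm (Fin n) × (Fin n → Bool)

/-- The value `π_i` (for `1 ≤ i ≤ n`) of the signed permutation, with `π_0 = 0`. -/
def bval {n : ℕ} (w : BG n) (i : ℕ) : ℤ :=
  if h : 1 ≤ i ∧ i ≤ n then
    (if w.2 ⟨i - 1, by omega⟩ then -1 else 1) * (((w.1 ⟨i - 1, by omega⟩ : Fin n) : ℕ) + 1 : ℤ)
  else 0

/-- `edes_B`: even `i ∈ {0,…,n−1}` with `π_i > π_{i+1}`. -/
def edesB {n : ℕ} (w : BG n) : ℕ :=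
  ((range n).filter fun i => Even i ∧ bval w (i + 1) < bval w i).card

/-- `odes_B`: odd `i ∈ {0,…,n−1}` with `π_i > π_{i+1}`. -/
def odesB {n : ℕ} (w : BG n) : ℕ :=
  ((range n).filter fun i => Odd i ∧ bval w (i + 1) < bval w i).card

/-- `easc_B`: even `i ∈ {0,…,n−1}` with `π_i < π_{i+1}`. -/
def eascB {n : ℕ} (w : BG n) : ℕ :=
  ((range n).filter fun i => Even i ∧ bval w i < bval w (i + 1)).card

/-- `oasc_B`: odd `i ∈ {0,…,n−1}` with `π_i < π_{i+1}`. -/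
def oascB {n : ℕ} (w : BG n) : ℕ :=
  ((range n).filter fun i => Odd i ∧ bval w i < bval w (i + 1)).card

/-- type B inversion number -/
def invB {n : ℕ} (w : BG n) : ℕ :=
  ((Icc 1 n ×ˢ Icc 1 n).filter fun p => p.1 < p.2 ∧ bval w p.2 < bval w p.1).card
  + ((Icc 1 n ×ˢ Icc 1 n).filter fun p => p.1 < p.2 ∧ bval w p.2 < -bval w p.1).card
  + ((Icc 1 n).filter fun i => bval w i < 0).card

/-- `B_n(s,t,q)` -/
noncomputable def Bpoly {A : Type*} [CommRing A] (n : ℕ) (s t q : A) : A :=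
  ∑ w : BG n, s ^ edesB w * t ^ odesB w * q ^ invB w

/-- `B_n(1,q)` -/
noncomputable def BOne {A : Type*} [CommRing A] (n : ℕ) (q : A) : A :=
  ∑ w : BG n, q ^ invB w

/-- `[k]_q` -/
def qInt {A : Type*} [CommRing A] (k : ℕ) (q : A) : A := ∑ i ∈ range k, q ^ i

/-- `[k]_q!` -/
def qFact {A : Type*} [CommRing A] (k : ℕ) (q : A) : A := ∏ i ∈ range k, qInt (i + 1) q

noncomputable section

/-- the field `ℚ(q)` -/
abbrev Kq : Type := RatFunc ℚ

/-- the variable `q` -/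
def qv : Kq := RatFunc.X

/-- the Gaussian binomial coefficient `[n]_q!/([r]_q! [n−r]_q!)` -/
def qBinom (n r : ℕ) (q : Kq) : Kq := qFact n q / (qFact r q * qFact (n - r) q)


/-- set of absolute values -/
def absSet (B : Finset ℤ) : Finset ℤ := B.image (fun b => (b.natAbs : ℤ))

/-- the complement of the absolute values inside `[1,n]` -/
def Cset (n : ℕ) (B : Finset ℤ) : Finset ℤ := Finset.Icc (1:ℤ) n \ absSet B

/-- admissible sets of signed values -/
def Dom (n r : ℕ) : Finset (Finset ℤ) :=
  (Finset.Icc (-(n:ℤ)) n).powerset.filter fun B =>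
    B.card = r ∧ (∀ b ∈ B, b ≠ 0) ∧ ∀ b ∈ B, ∀ b' ∈ B, b.natAbs = b'.natAbs → b = b'

/-- the statistic -/
def fstat (n r : ℕ) (B : Finset ℤ) (b : ℤ) : ℕ :=
  if b < 0 then (n - r) + b.natAbs
  else ((Cset n B).filter (fun a => b < a)).card

def Ssum (n r : ℕ) : Kq := ∑ B ∈ Dom n r, qv ^ (∑ b ∈ B, fstat n r B b)

lemma mem_Dom_iff {n r : ℕ} {B : Finset ℤ} :
    B ∈ Dom n r ↔ (∀ b ∈ B, b ≠ 0 ∧ b.natAbs ≤ n) ∧ B.card = r ∧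
      (∀ b ∈ B, ∀ b' ∈ B, b.natAbs = b'.natAbs → b = b') := by
  simp only [Dom, mem_filter, mem_powerset]
  constructor
  · rintro ⟨hsub, hc, h0, hinj⟩
    refine ⟨fun b hb => ⟨h0 b hb, ?_⟩, hc, hinj⟩
    have := hsub hb; simp only [mem_Icc] at this; omega
  · rintro ⟨h1, hc, hinj⟩
    refine ⟨fun b hb => ?_, hc, fun b hb => (h1 b hb).1, hinj⟩
    have := h1 b hb; simp only [mem_Icc]; omega

lemma absSet_subset {n r : ℕ} {B : Finset ℤ} (hB : B ∈ Dom n r) :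
    absSet B ⊆ Finset.Icc (1:ℤ) n := by
  rw [mem_Dom_iff] at hB
  intro a ha
  simp only [absSet, mem_image] at ha
  obtain ⟨b, hb, rfl⟩ := ha
  have := hB.1 b hb
  simp only [mem_Icc]
  omega

lemma absSet_card {n r : ℕ} {B : Finset ℤ} (hB : B ∈ Dom n r) :
    (absSet B).card = r := by
  rw [mem_Dom_iff] at hB
  rw [absSet, Finset.card_image_of_injOn, hB.2.1]
  intro b hb b' hb' h
  simp only at h
  exact hB.2.2 b hb b' hb' (Nat.cast_inj.mp h)

lemma Cset_card {n r : ℕ} {B : Finset ℤ} (hr : r ≤ n) (hB : B ∈ Dom n r) :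
    (Cset n B).card = n - r := by
  rw [Cset, Finset.card_sdiff_of_subset (absSet_subset hB), absSet_card hB, Int.card_Icc]
  omega

lemma r_le_of_mem_Dom {n r : ℕ} {B : Finset ℤ} (hB : B ∈ Dom n r) : r ≤ n := by
  have h1 := absSet_card hB
  have h2 := Finset.card_le_card (absSet_subset hB)
  rw [h1, Int.card_Icc] at h2
  omega

lemma Cset_pos {n : ℕ} {B : Finset ℤ} {a : ℤ} (ha : a ∈ Cset n B) : 1 ≤ a ∧ a ≤ n := by
  simp only [Cset, mem_sdiff, mem_Icc] at ha; exact ha.1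

lemma not_mem_absSet {n : ℕ} {B : Finset ℤ} {a : ℤ} (ha : a ∈ Cset n B) : a ∉ absSet B :=
  (Finset.mem_sdiff.1 ha).2

lemma Cset_disj_B {n r : ℕ} {B : Finset ℤ} (hB : B ∈ Dom n r) {a : ℤ}
    (ha : a ∈ Cset n B) : a ∉ B := by
  intro hab
  apply not_mem_absSet ha
  have hpos := (Cset_pos ha).1
  simp only [absSet, mem_image]
  exact ⟨a, hab, by omega⟩

lemma qInt_add {A : Type*} [CommRing A] (a b : ℕ) (q : A) :
    qInt (a + b) q = qInt a q + q ^ a * qInt b q := by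
  induction b with
  | zero => simp [qInt]
  | succ b ih =>
      have hb1 : qInt (b+1) q = qInt b q + q ^ b := Finset.sum_range_succ _ _
      have hab : qInt ((a+b)+1) q = qInt (a+b) q + q ^ (a+b) := Finset.sum_range_succ _ _
      rw [show a + (b+1) = (a+b)+1 by omega, hab, ih, hb1]
      ring

lemma key_identity (r m : ℕ) :
    qv ^ (r+1) * qInt (m+1) qv * (1 + qv ^ (m+1)) + (1 + qv ^ (r+2*m+3)) * qInt (r+1) qv
      = qInt (r+m+2) qv * (1 + qv ^ (r+m+2)) := by
  have h1 : qInt (r+m+2) qv = qInt (r+1) qv + qv ^ (r+1) * qInt (m+1) qv := by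
    have := qInt_add (r+1) (m+1) qv
    rw [show r+1+(m+1) = r+m+2 by omega] at this
    exact this
  have h2 : qInt (r+m+2) qv = qInt (m+1) qv + qv ^ (m+1) * qInt (r+1) qv := by
    have := qInt_add (m+1) (r+1) qv
    rw [show m+1+(r+1) = r+m+2 by omega] at this
    exact this
  have h3 : qInt (m+1) qv + qv ^ (m+1) * qInt (r+1) qv
      = qInt (r+1) qv + qv ^ (r+1) * qInt (m+1) qv := by rw [← h1, ← h2]
  rw [h1]
  linear_combination (qv ^ (r+m+2)) * h3

lemma Dom_zero (n : ℕ) : Dom n 0 = {∅} := by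
  ext B
  simp only [mem_Dom_iff, mem_singleton]
  constructor
  · rintro ⟨-, hc, -⟩; exact Finset.card_eq_zero.mp hc
  · rintro rfl; simp

lemma Ssum_zero (n : ℕ) : Ssum n 0 = 1 := by
  rw [Ssum, Dom_zero]; simp

lemma Dom_empty {n r : ℕ} (h : n < r) : Dom n r = ∅ := by
  rw [Finset.eq_empty_iff_forall_notMem]
  intro B hB
  exact absurd (r_le_of_mem_Dom hB) (by omega)

lemma fstat_step {n r : ℕ} {B : Finset ℤ} (hB : B ∈ Dom n r) {b : ℤ} (hb : b ∈ B) :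
    fstat (n+1) r B b = fstat n r B b + 1 := by
  have hr : r ≤ n := r_le_of_mem_Dom hB
  rw [mem_Dom_iff] at hB
  by_cases hneg : b < 0
  · simp only [fstat, if_pos hneg]; omega
  · simp only [fstat, if_neg hneg]
    have hCeq : Cset (n+1) B = insert ((n+1 : ℕ) : ℤ) (Cset n B) := by
      have hnot : ((n+1:ℕ):ℤ) ∉ absSet B := by
        simp only [absSet, mem_image]
        rintro ⟨x, hx, hx2⟩
        have := hB.1 x hx
        omega
      ext a
      simp only [Cset, mem_sdiff, mem_Icc, mem_insert]
      constructor
      · rintro ⟨⟨h1, h2⟩, h3⟩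
        by_cases ha : a = ((n+1:ℕ):ℤ)
        · exact Or.inl ha
        · exact Or.inr ⟨⟨h1, by push_cast at h2 ⊢; omega⟩, h3⟩
      · rintro (rfl | ⟨⟨h1, h2⟩, h3⟩)
        · exact ⟨⟨by push_cast; omega, le_refl _⟩, hnot⟩
        · exact ⟨⟨h1, by push_cast at h2 ⊢; omega⟩, h3⟩
    rw [hCeq, Finset.filter_insert, if_pos (by
      have := hB.1 b hb
      omega), Finset.card_insert_of_notMem (by
        intro hmem
        have := Cset_pos (Finset.mem_of_mem_filter _ hmem)
        omega)]

lemma mem_Dom_mono {n r : ℕ} {B : Finset ℤ} (hB : B ∈ Dom n r) : B ∈ Dom (n+1) r := by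
  rw [mem_Dom_iff] at hB ⊢
  exact ⟨fun b hb => ⟨(hB.1 b hb).1, by have := hB.1 b hb; omega⟩, hB.2⟩

lemma insert_mem_Dom {n r : ℕ} {B : Finset ℤ} (hB : B ∈ Dom n r) {c : ℤ}
    (hc : c.natAbs = n + 1) : insert c B ∈ Dom (n+1) (r+1) := by
  rw [mem_Dom_iff] at hB ⊢
  have hcB : c ∉ B := fun h => by have := hB.1 c h; omega
  refine ⟨?_, ?_, ?_⟩
  · intro b hb
    rcases Finset.mem_insert.mp hb with rfl | hb
    · constructor <;> omega
    · have := hB.1 b hb; constructor; exact this.1; omega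
  · rw [Finset.card_insert_of_notMem hcB, hB.2.1]
  · intro b hb b' hb' h
    rcases Finset.mem_insert.mp hb with hbc | hb2 <;>
      rcases Finset.mem_insert.mp hb' with hbc' | hb2'
    · rw [hbc, hbc']
    · exfalso; have := hB.1 b' hb2'; subst hbc; omega
    · exfalso; have := hB.1 b hb2; subst hbc'; omega
    · exact hB.2.2 b hb2 b' hb2' h

lemma fstat_insert {n r : ℕ} {B : Finset ℤ} (hB : B ∈ Dom n r) {c : ℤ}
    (hc : c.natAbs = n + 1) {b : ℤ} (hb : b ∈ B) :
    fstat (n+1) (r+1) (insert c B) b = fstat n r B b := by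
  have hr : r ≤ n := r_le_of_mem_Dom hB
  rw [mem_Dom_iff] at hB
  by_cases hneg : b < 0
  · simp only [fstat, if_pos hneg]; omega
  · simp only [fstat, if_neg hneg]
    congr 1
    have : Cset (n+1) (insert c B) = Cset n B := by
      have habs : absSet (insert c B) = insert ((n+1:ℕ):ℤ) (absSet B) := by
        simp only [absSet, Finset.image_insert, hc]
      ext a
      simp only [Cset, habs, mem_sdiff, mem_Icc, mem_insert, not_or]
      constructor
      · rintro ⟨⟨h1, h2⟩, h3, h4⟩
        exact ⟨⟨h1, by push_cast at h2 ⊢; omega⟩, h4⟩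
      · rintro ⟨⟨h1, h2⟩, h3⟩
        refine ⟨⟨h1, by push_cast at h2 ⊢; omega⟩, by push_cast; omega, h3⟩
    rw [this]

lemma fstat_insert_self {n r : ℕ} {B : Finset ℤ} (hB : B ∈ Dom n r) :
    fstat (n+1) (r+1) (insert ((n+1:ℕ):ℤ) B) ((n+1:ℕ):ℤ) = 0 := by
  rw [fstat, if_neg (by push_cast; omega), Finset.card_eq_zero,
    Finset.filter_eq_empty_iff]
  intro a ha
  have := Cset_pos ha
  omega

lemma fstat_insert_self_neg {n r : ℕ} {B : Finset ℤ} (hB : B ∈ Dom n r) (hr : r ≤ n) :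
    fstat (n+1) (r+1) (insert (-((n+1:ℕ):ℤ)) B) (-((n+1:ℕ):ℤ)) = 2*n+1-r := by
  rw [fstat, if_pos (by push_cast; omega)]
  have : (-((n+1:ℕ):ℤ)).natAbs = n+1 := by omega
  omega

lemma Ssum_of_empty {n r : ℕ} (h : n < r) : Ssum n r = 0 := by
  rw [Ssum, Dom_empty h, Finset.sum_empty]

lemma erase_mem_Dom {n r : ℕ} {B : Finset ℤ} (hB : B ∈ Dom (n+1) (r+1)) {c : ℤ}
    (hc : c.natAbs = n+1) (hcB : c ∈ B) : B.erase c ∈ Dom n r := by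
  rw [mem_Dom_iff] at hB ⊢
  refine ⟨?_, ?_, ?_⟩
  · intro b hb
    have hbB := Finset.mem_of_mem_erase hb
    have hbc := Finset.ne_of_mem_erase hb
    have h1 := hB.1 b hbB
    refine ⟨h1.1, ?_⟩
    by_contra hcon
    have : b.natAbs = n + 1 := by omega
    exact hbc (hB.2.2 b hbB c hcB (by omega))
  · rw [Finset.card_erase_of_mem hcB, hB.2.1]
    omega
  · intro b hb b' hb' h
    exact hB.2.2 b (Finset.mem_of_mem_erase hb) b' (Finset.mem_of_mem_erase hb') h

lemma Ssum_insert_bij (n r : ℕ) (c : ℤ) (hc : c.natAbs = n+1) (e : ℕ)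
    (he : ∀ B ∈ Dom n r, fstat (n+1) (r+1) (insert c B) c = e) :
    ∑ B ∈ (Dom (n+1) (r+1)).filter (fun B => c ∈ B),
        qv ^ (∑ b ∈ B, fstat (n+1) (r+1) B b)
      = qv ^ e * Ssum n r := by
  rw [Ssum, Finset.mul_sum]
  refine Finset.sum_nbij' (fun B => B.erase c) (fun B => insert c B) ?_ ?_ ?_ ?_ ?_
  · intro B hB
    rw [Finset.mem_filter] at hB
    exact erase_mem_Dom hB.1 hc hB.2
  · intro B hB
    rw [Finset.mem_filter]
    exact ⟨insert_mem_Dom hB hc, Finset.mem_insert_self _ _⟩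
  · intro B hB
    rw [Finset.mem_filter] at hB
    exact Finset.insert_erase hB.2
  · intro B hB
    refine Finset.erase_insert (fun hcB => ?_)
    rw [mem_Dom_iff] at hB
    have := hB.1 c hcB
    omega
  · intro B hB
    rw [Finset.mem_filter] at hB
    obtain ⟨hB1, hcB⟩ := hB
    have hins : insert c (B.erase c) = B := Finset.insert_erase hcB
    have hBe : B.erase c ∈ Dom n r := erase_mem_Dom hB1 hc hcB
    have hsum : ∑ b ∈ B, fstat (n+1) (r+1) B b
        = e + ∑ b ∈ B.erase c, fstat n r (B.erase c) b := by
      rw [← Finset.add_sum_erase _ _ hcB]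
      congr 1
      · conv_lhs => rw [← hins]
        exact he _ hBe
      · refine Finset.sum_congr rfl fun b hb => ?_
        have : fstat (n+1) (r+1) (insert c (B.erase c)) b = fstat n r (B.erase c) b :=
          fstat_insert hBe hc hb
        rwa [hins] at this
    rw [hsum, pow_add]

lemma filter_D0 (n r : ℕ) :
    ((Dom (n+1) r).filter fun B => ¬ ((n+1:ℕ):ℤ) ∈ B ∧ ¬ (-((n+1:ℕ):ℤ)) ∈ B)
      = Dom n r := by
  ext B
  rw [Finset.mem_filter, mem_Dom_iff, mem_Dom_iff]
  constructor
  · rintro ⟨⟨h1, h2, h3⟩, h4, h5⟩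
    refine ⟨fun b hb => ⟨(h1 b hb).1, ?_⟩, h2, h3⟩
    have := h1 b hb
    rcases Nat.lt_or_ge b.natAbs (n+1) with h | h
    · omega
    · exfalso
      have hb1 : b.natAbs = n + 1 := by omega
      have : b = ((n+1:ℕ):ℤ) ∨ b = -((n+1:ℕ):ℤ) := by omega
      rcases this with rfl | rfl
      · exact h4 hb
      · exact h5 hb
  · rintro ⟨h1, h2, h3⟩
    refine ⟨⟨fun b hb => ⟨(h1 b hb).1, by have := h1 b hb; omega⟩, h2, h3⟩, ?_, ?_⟩
    · intro hb; have := h1 _ hb; simp at this; omega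
    · intro hb; have := h1 _ hb; simp at this; omega

lemma Ssum_notmem (n r : ℕ) :
    ∑ B ∈ Dom n r, qv ^ (∑ b ∈ B, fstat (n+1) r B b) = qv ^ r * Ssum n r := by
  rw [Ssum, Finset.mul_sum]
  refine Finset.sum_congr rfl fun B hB => ?_
  have hsum : ∑ b ∈ B, fstat (n+1) r B b = r + ∑ b ∈ B, fstat n r B b := by
    rw [Finset.sum_congr rfl (fun b hb => fstat_step hB hb), Finset.sum_add_distrib,
      Finset.sum_const, (mem_Dom_iff.mp hB).2.1, smul_eq_mul, mul_one]
    omega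
  rw [hsum, pow_add]

lemma Ssum_rec (n r : ℕ) (hr : r ≤ n) :
    Ssum (n+1) (r+1)
      = qv ^ (r+1) * Ssum n (r+1) + (1 + qv ^ (2*n+1-r)) * Ssum n r := by
  rw [Ssum,
    ← Finset.sum_filter_add_sum_filter_not (Dom (n+1) (r+1)) (fun B => ((n+1:ℕ):ℤ) ∈ B),
    ← Finset.sum_filter_add_sum_filter_not
      ((Dom (n+1) (r+1)).filter (fun B => ¬ ((n+1:ℕ):ℤ) ∈ B))
      (fun B => (-((n+1:ℕ):ℤ)) ∈ B),
    Finset.filter_filter, Finset.filter_filter]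
  have hS1 : ∑ B ∈ (Dom (n+1) (r+1)).filter (fun B => ((n+1:ℕ):ℤ) ∈ B),
      qv ^ (∑ b ∈ B, fstat (n+1) (r+1) B b) = Ssum n r := by
    rw [Ssum_insert_bij n r _ (by push_cast; omega) 0 (fun B hB => fstat_insert_self hB), pow_zero,
      one_mul]
  have hS2 : ∑ B ∈ (Dom (n+1) (r+1)).filter
        (fun B => ¬ ((n+1:ℕ):ℤ) ∈ B ∧ (-((n+1:ℕ):ℤ)) ∈ B),
      qv ^ (∑ b ∈ B, fstat (n+1) (r+1) B b) = qv ^ (2*n+1-r) * Ssum n r := by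
    rw [Finset.filter_congr (q := fun B => (-((n+1:ℕ):ℤ)) ∈ B) ?_]
    · exact Ssum_insert_bij n r _ (by push_cast; omega) (2*n+1-r)
        (fun B hB => fstat_insert_self_neg hB (r_le_of_mem_Dom hB))
    · intro B hB
      constructor
      · exact fun h => h.2
      · intro hneg
        refine ⟨fun hpos => ?_, hneg⟩
        rw [mem_Dom_iff] at hB
        have := hB.2.2 _ hpos _ hneg (by push_cast; omega)
        omega
  have hS3 : ∑ B ∈ (Dom (n+1) (r+1)).filter
        (fun B => ¬ ((n+1:ℕ):ℤ) ∈ B ∧ ¬ (-((n+1:ℕ):ℤ)) ∈ B),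
      qv ^ (∑ b ∈ B, fstat (n+1) (r+1) B b) = qv ^ (r+1) * Ssum n (r+1) := by
    rw [filter_D0]
    exact Ssum_notmem n (r+1)
  rw [hS1, hS2, hS3]
  ring

lemma qFact_zero : qFact 0 (qv) = 1 := by simp [qFact]

lemma qFact_succ (k : ℕ) : qFact (k+1) qv = qFact k qv * qInt (k+1) qv :=
  Finset.prod_range_succ _ _

lemma part2 (n : ℕ) : ∀ r, r ≤ n → Ssum n r * qFact r qv * qFact (n-r) qv
    = qFact n qv * ∏ i ∈ range r, (1 + qv ^ (n-i)) := by
  induction n with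
  | zero =>
      intro r hr
      interval_cases r
      simp [Ssum_zero, qFact]
  | succ n ih =>
      intro r hr
      match r with
      | 0 => rw [Ssum_zero]; simp [qFact_zero]
      | (r'+1) =>
        by_cases hrn : r' = n
        · subst hrn
          have hrec := Ssum_rec r' r' le_rfl
          rw [Ssum_of_empty (show r' < r'+1 by omega), show 2*r'+1-r' = r'+1 by omega] at hrec
          have hIH := ih r' le_rfl
          rw [Nat.sub_self, qFact_zero, mul_one] at hIH
          rw [show r'+1-(r'+1) = 0 by omega, qFact_zero, mul_one, hrec, qFact_succ,
            Finset.prod_range_succ']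
          have hprod : (∏ i ∈ range r', (1 + qv ^ (r'+1-(i+1))))
              = ∏ i ∈ range r', (1 + qv ^ (r'-i)) := by
            refine Finset.prod_congr rfl fun i _ => ?_
            rw [Nat.succ_sub_succ]
          rw [hprod, Nat.sub_zero]
          linear_combination ((1 + qv ^ (r'+1)) * qInt (r'+1) qv) * hIH
        · obtain ⟨m, rfl⟩ : ∃ m, n = r' + 1 + m := ⟨n - r' - 1, by omega⟩
          have hrec := Ssum_rec (r'+1+m) r' (by omega)
          rw [show 2*(r'+1+m)+1-r' = r'+2*m+3 by omega] at hrec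
          have hIH1 := ih (r'+1) (by omega)
          have hIH2 := ih r' (by omega)
          rw [show r'+1+m-(r'+1) = m by omega, Finset.prod_range_succ,
            show r'+1+m-r' = m+1 by omega, qFact_succ r'] at hIH1
          rw [show r'+1+m-r' = m+1 by omega, qFact_succ m] at hIH2
          rw [show r'+1+m+1-(r'+1) = m+1 by omega, hrec, qFact_succ r',
            qFact_succ m, qFact_succ (r'+1+m), Finset.prod_range_succ']
          have hprod : (∏ i ∈ range r', (1 + qv ^ (r'+1+m+1-(i+1))))
              = ∏ i ∈ range r', (1 + qv ^ (r'+1+m-i)) := by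
            refine Finset.prod_congr rfl fun i _ => ?_
            rw [Nat.succ_sub_succ]
          rw [hprod, Nat.sub_zero]
          have hkey := key_identity r' m
          rw [show r'+m+2 = r'+1+m+1 by omega] at hkey
          linear_combination (qv ^ (r'+1) * qInt (m+1) qv) * hIH1
            + ((1 + qv ^ (r'+2*m+3)) * qInt (r'+1) qv) * hIH2
            + (qFact (r'+1+m) qv * ∏ i ∈ range r', (1 + qv ^ (r'+1+m-i))) * hkey

noncomputable def toPerm {n : ℕ} (f : Fin n → Fin n) : Equiv.Perm (Fin n) :=
  if h : Function.Bijective f then Equiv.ofBijective f h else 1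

lemma toPerm_apply {n : ℕ} {f : Fin n → Fin n} (h : Function.Bijective f) (i : Fin n) :
    toPerm f i = f i := by rw [toPerm, dif_pos h]; rfl

def bvals (n r : ℕ) (B : Finset ℤ) : ℕ → ℤ := fun i =>
  if h : (Cset n B).card = n - r ∧ B.card = r then
    if hi : i < n - r then (Cset n B).orderEmbOfFin h.1 ⟨i, hi⟩
    else if hi2 : i - (n-r) < r then B.orderEmbOfFin h.2 ⟨i - (n-r), hi2⟩
    else 0
  else 0

noncomputable def gmap (n r : ℕ) (B : Finset ℤ) : BG n :=
  (toPerm (fun i : Fin n =>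
     if h : (bvals n r B i).natAbs - 1 < n then ⟨(bvals n r B i).natAbs - 1, h⟩ else i),
   fun i : Fin n => decide (bvals n r B (i:ℕ) < 0))

def hmap (n r : ℕ) (w : BG n) : Finset ℤ :=
  (Finset.Icc (n-r+1) n).image (fun j => bval w j)

section PartOne

variable {n r : ℕ} {B : Finset ℤ}

lemma bvals_cond (hr : r ≤ n) (hB : B ∈ Dom n r) :
    (Cset n B).card = n - r ∧ B.card = r :=
  ⟨Cset_card hr hB, (mem_Dom_iff.mp hB).2.1⟩

lemma bvals_eq_C (hr : r ≤ n) (hB : B ∈ Dom n r) {i : ℕ} (hi : i < n - r) :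
    bvals n r B i = (Cset n B).orderEmbOfFin (bvals_cond hr hB).1 ⟨i, hi⟩ := by
  rw [bvals, dif_pos (bvals_cond hr hB), dif_pos hi]

lemma bvals_eq_B (hr : r ≤ n) (hB : B ∈ Dom n r) {i : ℕ} (hi1 : n - r ≤ i) (hi2 : i < n) :
    bvals n r B i = B.orderEmbOfFin (bvals_cond hr hB).2 ⟨i - (n-r), by omega⟩ := by
  rw [bvals, dif_pos (bvals_cond hr hB), dif_neg (by omega), dif_pos (by omega)]

lemma bvals_mem_C (hr : r ≤ n) (hB : B ∈ Dom n r) {i : ℕ} (hi : i < n - r) :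
    bvals n r B i ∈ Cset n B := by
  rw [bvals, dif_pos (bvals_cond hr hB), dif_pos hi]
  exact Finset.orderEmbOfFin_mem _ _ _

lemma bvals_mem_B (hr : r ≤ n) (hB : B ∈ Dom n r) {i : ℕ} (hi1 : n - r ≤ i) (hi2 : i < n) :
    bvals n r B i ∈ B := by
  rw [bvals, dif_pos (bvals_cond hr hB), dif_neg (by omega), dif_pos (by omega)]
  exact Finset.orderEmbOfFin_mem _ _ _

lemma bvals_ne_zero (hr : r ≤ n) (hB : B ∈ Dom n r) {i : ℕ} (hi : i < n) :
    bvals n r B i ≠ 0 ∧ 1 ≤ (bvals n r B i).natAbs ∧ (bvals n r B i).natAbs ≤ n := by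
  rcases Nat.lt_or_ge i (n - r) with h | h
  · have := Cset_pos (bvals_mem_C hr hB h)
    omega
  · have := (mem_Dom_iff.mp hB).1 _ (bvals_mem_B hr hB h hi)
    omega

lemma bvals_abs_inj (hr : r ≤ n) (hB : B ∈ Dom n r) {i j : ℕ} (hi : i < n) (hj : j < n)
    (h : (bvals n r B i).natAbs = (bvals n r B j).natAbs) : i = j := by
  have hD := mem_Dom_iff.mp hB
  have habs : ∀ {k l : ℕ}, k < n - r → n - r ≤ l → l < n →
      (bvals n r B k).natAbs ≠ (bvals n r B l).natAbs := by
    intro k l hk hl1 hl2 heq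
    have hkC := bvals_mem_C hr hB hk
    have hlB := bvals_mem_B hr hB hl1 hl2
    apply not_mem_absSet hkC
    simp only [absSet, Finset.mem_image]
    refine ⟨bvals n r B l, hlB, ?_⟩
    have := Cset_pos hkC
    omega
  rcases Nat.lt_or_ge i (n - r) with h1 | h1 <;> rcases Nat.lt_or_ge j (n - r) with h2 | h2
  · -- both in C
    have hiC := Cset_pos (bvals_mem_C hr hB h1)
    have hjC := Cset_pos (bvals_mem_C hr hB h2)
    have heq : bvals n r B i = bvals n r B j := by omega
    rw [bvals_eq_C hr hB h1, bvals_eq_C hr hB h2] at heq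
    have := ((Cset n B).orderEmbOfFin (bvals_cond hr hB).1).injective heq
    exact congrArg Fin.val this
  · exact absurd h (habs h1 h2 hj)
  · exact absurd h.symm (habs h2 h1 hi)
  · -- both in B
    have hiB := bvals_mem_B hr hB h1 hi
    have hjB := bvals_mem_B hr hB h2 hj
    have heq : bvals n r B i = bvals n r B j := hD.2.2 _ hiB _ hjB h
    rw [bvals_eq_B hr hB h1 hi, bvals_eq_B hr hB h2 hj] at heq
    have := (B.orderEmbOfFin (bvals_cond hr hB).2).injective heq
    have := congrArg Fin.val this
    simp only at this
    omega

lemma bvals_mono_C (hr : r ≤ n) (hB : B ∈ Dom n r) {i j : ℕ} (hij : i < j) (hj : j < n - r) :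
    bvals n r B i < bvals n r B j := by
  rw [bvals_eq_C hr hB (show i < n - r by omega), bvals_eq_C hr hB hj]
  exact ((Cset n B).orderEmbOfFin (bvals_cond hr hB).1).strictMono (by exact hij)

lemma bvals_mono_B (hr : r ≤ n) (hB : B ∈ Dom n r) {i j : ℕ} (hi : n - r ≤ i) (hij : i < j)
    (hj : j < n) : bvals n r B i < bvals n r B j := by
  rw [bvals_eq_B hr hB hi (show i < n by omega), bvals_eq_B hr hB (show n - r ≤ j by omega) hj]
  exact (B.orderEmbOfFin (bvals_cond hr hB).2).strictMono (by simp only [Fin.mk_lt_mk]; omega)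

lemma gmap_bijective (hr : r ≤ n) (hB : B ∈ Dom n r) :
    Function.Bijective (fun i : Fin n =>
      if h : (bvals n r B i).natAbs - 1 < n then (⟨(bvals n r B i).natAbs - 1, h⟩ : Fin n)
      else i) := by
  rw [Fintype.bijective_iff_injective_and_card]
  refine ⟨fun i j hij => ?_, rfl⟩
  have hi := bvals_ne_zero hr hB i.2
  have hj := bvals_ne_zero hr hB j.2
  simp only at hij
  rw [dif_pos (show (bvals n r B ↑i).natAbs - 1 < n by omega),
    dif_pos (show (bvals n r B ↑j).natAbs - 1 < n by omega), Fin.mk.injEq] at hij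
  exact Fin.ext (bvals_abs_inj hr hB i.2 j.2 (by omega))

lemma bval_gmap (hr : r ≤ n) (hB : B ∈ Dom n r) {j : ℕ} (hj1 : 1 ≤ j) (hj2 : j ≤ n) :
    bval (gmap n r B) j = bvals n r B (j - 1) := by
  have hv := bvals_ne_zero hr hB (show j - 1 < n by omega)
  have key : ∀ (i : Fin n), (i:ℕ) = j - 1 →
      (if (gmap n r B).2 i then (-1:ℤ) else 1) * (((gmap n r B).1 i : ℕ) + 1 : ℤ)
        = bvals n r B (j-1) := by
    intro i hi
    have h2 : (gmap n r B).2 i = decide (bvals n r B (i:ℕ) < 0) := rfl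
    have h1 : ((gmap n r B).1 i : ℕ) = (bvals n r B (i:ℕ)).natAbs - 1 := by
      show ((toPerm _) _ : ℕ) = _
      rw [toPerm_apply (gmap_bijective hr hB), dif_pos (by rw [hi]; omega)]
    rw [h1, h2, hi]
    by_cases hneg : bvals n r B (j-1) < 0
    · rw [if_pos (by simpa using hneg)]
      omega
    · rw [if_neg (by simpa using hneg)]
      omega
  rw [bval, dif_pos ⟨hj1, hj2⟩]
  exact key _ rfl

lemma bvals_surj_C (hr : r ≤ n) (hB : B ∈ Dom n r) {a : ℤ} (ha : a ∈ Cset n B) :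
    ∃ j, 1 ≤ j ∧ j ≤ n - r ∧ bvals n r B (j - 1) = a := by
  have : a ∈ Set.range ((Cset n B).orderEmbOfFin (bvals_cond hr hB).1) := by
    rw [Finset.range_orderEmbOfFin]; exact ha
  obtain ⟨i, hi⟩ := this
  refine ⟨i + 1, by omega, by omega, ?_⟩
  rw [show (i:ℕ) + 1 - 1 = (i:ℕ) by omega, bvals_eq_C hr hB i.2]
  rw [← hi]

lemma bvals_surj_B (hr : r ≤ n) (hB : B ∈ Dom n r) {b : ℤ} (hb : b ∈ B) :
    ∃ j, n - r + 1 ≤ j ∧ j ≤ n ∧ bvals n r B (j - 1) = b := by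
  have : b ∈ Set.range (B.orderEmbOfFin (bvals_cond hr hB).2) := by
    rw [Finset.range_orderEmbOfFin]; exact hb
  obtain ⟨i, hi⟩ := this
  have hiv := i.2
  refine ⟨n - r + 1 + i, by omega, by omega, ?_⟩
  rw [bvals_eq_B hr hB (show n - r ≤ n - r + 1 + i - 1 by omega) (by omega)]
  rw [← hi]
  exact congrArg _ (Fin.ext (by show n - r + 1 + ↑i - 1 - (n - r) = ↑i; omega))

/-- general fact : absolute value of `bval w j` is `σ(j-1)+1` -/
lemma bval_natAbs {w : BG n} {j : ℕ} (hj1 : 1 ≤ j) (hj2 : j ≤ n) :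
    (bval w j).natAbs = (w.1 ⟨j - 1, by omega⟩ : ℕ) + 1 := by
  rw [bval, dif_pos ⟨hj1, hj2⟩]
  rcases w.2 ⟨j-1, by omega⟩ with _ | _ <;> simp <;> omega

lemma bval_ne_zero {w : BG n} {j : ℕ} (hj1 : 1 ≤ j) (hj2 : j ≤ n) : bval w j ≠ 0 := by
  have := bval_natAbs (w := w) hj1 hj2
  omega

lemma bval_natAbs_le {w : BG n} {j : ℕ} (hj1 : 1 ≤ j) (hj2 : j ≤ n) :
    (bval w j).natAbs ≤ n := by
  have h := bval_natAbs (w := w) hj1 hj2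
  have := (w.1 ⟨j - 1, by omega⟩).2
  omega

lemma bval_abs_inj {w : BG n} {j j' : ℕ} (hj1 : 1 ≤ j) (hj2 : j ≤ n) (hj1' : 1 ≤ j')
    (hj2' : j' ≤ n) (h : (bval w j).natAbs = (bval w j').natAbs) : j = j' := by
  rw [bval_natAbs hj1 hj2, bval_natAbs hj1' hj2'] at h
  have h2 : w.1 ⟨j - 1, by omega⟩ = w.1 ⟨j' - 1, by omega⟩ := Fin.ext (by omega)
  have := w.1.injective h2
  rw [Fin.mk.injEq] at this
  omega

lemma gmap_mem_F (hn : 1 ≤ n) (hr : r ≤ n) (hB : B ∈ Dom n r) :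
    (∀ j : ℕ, 1 ≤ j → j ≤ n - r → 0 < bval (gmap n r B) j) ∧
    (∀ j : ℕ, 1 ≤ j → j < n - r → bval (gmap n r B) j < bval (gmap n r B) (j + 1)) ∧
    (∀ j : ℕ, n - r + 1 ≤ j → j < n → bval (gmap n r B) j < bval (gmap n r B) (j + 1)) := by
  refine ⟨fun j h1 h2 => ?_, fun j h1 h2 => ?_, fun j h1 h2 => ?_⟩
  · rw [bval_gmap hr hB h1 (by omega)]
    exact (Cset_pos (bvals_mem_C hr hB (show j - 1 < n - r by omega))).1
  · rw [bval_gmap hr hB h1 (by omega), bval_gmap hr hB (by omega) (by omega)]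
    exact bvals_mono_C hr hB (by omega) (show j + 1 - 1 < n - r by omega)
  · rw [bval_gmap hr hB (by omega) (by omega), bval_gmap hr hB (by omega) (by omega)]
    exact bvals_mono_B hr hB (show n - r ≤ j - 1 by omega) (by omega)
      (show j + 1 - 1 < n by omega)

lemma hmap_gmap (hr : r ≤ n) (hB : B ∈ Dom n r) : hmap n r (gmap n r B) = B := by
  ext b
  rw [hmap, Finset.mem_image]
  constructor
  · rintro ⟨j, hj, rfl⟩
    rw [Finset.mem_Icc] at hj
    rw [bval_gmap hr hB (by omega) (by omega)]
    exact bvals_mem_B hr hB (by omega) (by omega)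
  · intro hb
    obtain ⟨j, h1, h2, h3⟩ := bvals_surj_B hr hB hb
    exact ⟨j, Finset.mem_Icc.mpr ⟨h1, h2⟩, by rw [bval_gmap hr hB (by omega) h2, h3]⟩

lemma card_filter_product_right (s t : Finset ℤ) (P : ℤ → ℤ → Prop)
    [∀ a b, Decidable (P a b)] :
    ((s ×ˢ t).filter fun p => P p.1 p.2).card = ∑ b ∈ t, (s.filter fun a => P a b).card := by
  rw [Finset.card_filter, Finset.sum_product, Finset.sum_comm]
  exact Finset.sum_congr rfl fun b _ => (Finset.card_filter _ _).symm

lemma card_filter_product_left (s t : Finset ℤ) (P : ℤ → ℤ → Prop)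
    [∀ a b, Decidable (P a b)] :
    ((s ×ˢ t).filter fun p => P p.1 p.2).card = ∑ a ∈ s, (t.filter fun b => P a b).card := by
  rw [Finset.card_filter, Finset.sum_product]
  exact Finset.sum_congr rfl fun b _ => (Finset.card_filter _ _).symm

lemma count_c3 (hr : r ≤ n) (hB : B ∈ Dom n r) :
    ((Finset.Icc 1 n).filter fun i => bval (gmap n r B) i < 0).card
      = (B.filter (fun b => b < 0)).card := by
  apply Finset.card_nbij (fun j => bval (gmap n r B) j)
  · intro j hj
    rw [Finset.mem_coe, Finset.mem_filter, Finset.mem_Icc] at hj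
    obtain ⟨⟨h1, h2⟩, h3⟩ := hj
    simp only [Finset.mem_coe, Finset.mem_filter]
    rw [bval_gmap hr hB h1 h2] at h3 ⊢
    refine ⟨?_, h3⟩
    rcases Nat.lt_or_ge (j-1) (n-r) with h | h
    · have := (Cset_pos (bvals_mem_C hr hB h)).1; omega
    · exact bvals_mem_B hr hB h (by omega)
  · intro j hj j' hj' h
    simp only [Finset.coe_filter, Set.mem_setOf_eq, Finset.mem_Icc] at hj hj'
    exact bval_abs_inj hj.1.1 hj.1.2 hj'.1.1 hj'.1.2 (congrArg Int.natAbs h)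
  · intro b hb
    simp only [Finset.coe_filter, Set.mem_setOf_eq] at hb
    obtain ⟨j, h1, h2, h3⟩ := bvals_surj_B hr hB hb.1
    refine ⟨j, ?_, ?_⟩
    · simp only [Finset.coe_filter, Set.mem_setOf_eq, Finset.mem_Icc]
      rw [bval_gmap hr hB (by omega) h2, h3]
      exact ⟨⟨by omega, h2⟩, hb.2⟩
    · show bval (gmap n r B) j = b
      rw [bval_gmap hr hB (by omega) h2, h3]

lemma count_c1 (hr : r ≤ n) (hB : B ∈ Dom n r) :
    ((Finset.Icc 1 n ×ˢ Finset.Icc 1 n).filter fun p =>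
        p.1 < p.2 ∧ bval (gmap n r B) p.2 < bval (gmap n r B) p.1).card
      = ((Cset n B ×ˢ B).filter fun p => p.2 < p.1).card := by
  apply Finset.card_nbij (fun p => (bval (gmap n r B) p.1, bval (gmap n r B) p.2))
  · rintro ⟨j1, j2⟩ hj
    simp only [Finset.mem_coe, Finset.mem_filter, Finset.mem_product, Finset.mem_Icc] at hj ⊢
    obtain ⟨⟨⟨ha1, ha2⟩, hb1, hb2⟩, hlt, hval⟩ := hj
    rw [bval_gmap hr hB ha1 ha2, bval_gmap hr hB hb1 hb2] at hval ⊢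
    have h2 : n - r + 1 ≤ j2 := by
      by_contra hcon
      exact absurd (bvals_mono_C hr hB (show j1 - 1 < j2 - 1 by omega) (by omega)) (by omega)
    have h1 : j1 ≤ n - r := by
      by_contra hcon
      exact absurd (bvals_mono_B hr hB (show n - r ≤ j1 - 1 by omega)
        (show j1 - 1 < j2 - 1 by omega) (by omega)) (by omega)
    exact ⟨⟨bvals_mem_C hr hB (by omega), bvals_mem_B hr hB (by omega) (by omega)⟩, hval⟩
  · rintro ⟨j1, j2⟩ hj ⟨j1', j2'⟩ hj' h
    simp only [Finset.coe_filter, Set.mem_setOf_eq, Finset.mem_product, Finset.mem_Icc,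
      Prod.mk.injEq] at hj hj' h
    have e1 := bval_abs_inj hj.1.1.1 hj.1.1.2 hj'.1.1.1 hj'.1.1.2 (congrArg Int.natAbs h.1)
    have e2 := bval_abs_inj hj.1.2.1 hj.1.2.2 hj'.1.2.1 hj'.1.2.2 (congrArg Int.natAbs h.2)
    simp [e1, e2]
  · rintro ⟨a, b⟩ hab
    simp only [Finset.coe_filter, Set.mem_setOf_eq, Finset.mem_product] at hab
    obtain ⟨⟨haC, hbB⟩, hba⟩ := hab
    obtain ⟨j1, ha1, ha2, ha3⟩ := bvals_surj_C hr hB haC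
    obtain ⟨j2, hb1, hb2, hb3⟩ := bvals_surj_B hr hB hbB
    refine ⟨(j1, j2), ?_, ?_⟩
    · simp only [Finset.coe_filter, Set.mem_setOf_eq, Finset.mem_product, Finset.mem_Icc]
      rw [bval_gmap hr hB ha1 (by omega), bval_gmap hr hB (by omega) hb2, ha3, hb3]
      exact ⟨⟨⟨ha1, by omega⟩, by omega, hb2⟩, by omega, hba⟩
    · show (bval (gmap n r B) j1, bval (gmap n r B) j2) = (a, b)
      rw [bval_gmap hr hB ha1 (by omega), bval_gmap hr hB (by omega) hb2, ha3, hb3]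

lemma count_c2 (hr : r ≤ n) (hB : B ∈ Dom n r) :
    ((Finset.Icc 1 n ×ˢ Finset.Icc 1 n).filter fun p =>
        p.1 < p.2 ∧ bval (gmap n r B) p.2 < - bval (gmap n r B) p.1).card
      = ((Cset n B ×ˢ B).filter fun p => p.1 + p.2 < 0).card
        + ((B ×ˢ B).filter fun p => p.1 < p.2 ∧ p.1 + p.2 < 0).card := by
  rw [← Finset.card_union_of_disjoint (by
    rw [Finset.disjoint_left]
    rintro ⟨x, y⟩ hx hy
    simp only [Finset.mem_filter, Finset.mem_product] at hx hy
    exact Cset_disj_B hB hx.1.1 hy.1.1)]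
  apply Finset.card_nbij (fun p => (bval (gmap n r B) p.1, bval (gmap n r B) p.2))
  · rintro ⟨j1, j2⟩ hj
    simp only [Finset.mem_coe, Finset.mem_filter, Finset.mem_product, Finset.mem_Icc, Finset.mem_union] at hj ⊢
    obtain ⟨⟨⟨ha1, ha2⟩, hb1, hb2⟩, hlt, hval⟩ := hj
    rw [bval_gmap hr hB ha1 ha2, bval_gmap hr hB hb1 hb2] at hval ⊢
    have h2 : n - r + 1 ≤ j2 := by
      by_contra hcon
      have w1 := (Cset_pos (bvals_mem_C hr hB (show j1 - 1 < n - r by omega))).1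
      have w2 := (Cset_pos (bvals_mem_C hr hB (show j2 - 1 < n - r by omega))).1
      omega
    rcases Nat.lt_or_ge (j1 - 1) (n - r) with h1 | h1
    · exact Or.inl ⟨⟨bvals_mem_C hr hB h1, bvals_mem_B hr hB (by omega) (by omega)⟩, by omega⟩
    · refine Or.inr ⟨⟨bvals_mem_B hr hB h1 (by omega), bvals_mem_B hr hB (by omega) (by omega)⟩,
        bvals_mono_B hr hB h1 (show j1 - 1 < j2 - 1 by omega) (by omega), by omega⟩
  · rintro ⟨j1, j2⟩ hj ⟨j1', j2'⟩ hj' h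
    simp only [Finset.coe_filter, Set.mem_setOf_eq, Finset.mem_product, Finset.mem_Icc,
      Prod.mk.injEq] at hj hj' h
    have e1 := bval_abs_inj hj.1.1.1 hj.1.1.2 hj'.1.1.1 hj'.1.1.2 (congrArg Int.natAbs h.1)
    have e2 := bval_abs_inj hj.1.2.1 hj.1.2.2 hj'.1.2.1 hj'.1.2.2 (congrArg Int.natAbs h.2)
    simp [e1, e2]
  · rintro ⟨x, y⟩ hxy
    simp only [Finset.coe_union, Set.mem_union, Finset.coe_filter, Set.mem_setOf_eq,
      Finset.mem_product] at hxy
    rcases hxy with ⟨⟨hxC, hyB⟩, hsum⟩ | ⟨⟨hxB, hyB⟩, hlt, hsum⟩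
    · obtain ⟨j1, ha1, ha2, ha3⟩ := bvals_surj_C hr hB hxC
      obtain ⟨j2, hb1, hb2, hb3⟩ := bvals_surj_B hr hB hyB
      refine ⟨(j1, j2), ?_, ?_⟩
      · simp only [Finset.coe_filter, Set.mem_setOf_eq, Finset.mem_product, Finset.mem_Icc]
        rw [bval_gmap hr hB ha1 (by omega), bval_gmap hr hB (by omega) hb2, ha3, hb3]
        exact ⟨⟨⟨ha1, by omega⟩, by omega, hb2⟩, by omega, by omega⟩
      · show (bval (gmap n r B) j1, bval (gmap n r B) j2) = (x, y)
        rw [bval_gmap hr hB ha1 (by omega), bval_gmap hr hB (by omega) hb2, ha3, hb3]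
    · obtain ⟨j1, ha1, ha2, ha3⟩ := bvals_surj_B hr hB hxB
      obtain ⟨j2, hb1, hb2, hb3⟩ := bvals_surj_B hr hB hyB
      have hj12 : j1 < j2 := by
        by_contra hcon
        rcases Nat.lt_or_ge j2 j1 with hc2 | hc2
        · have := bvals_mono_B hr hB (show n - r ≤ j2 - 1 by omega)
            (show j2 - 1 < j1 - 1 by omega) (by omega)
          omega
        · have : j1 = j2 := by omega
          subst this
          omega
      refine ⟨(j1, j2), ?_, ?_⟩
      · simp only [Finset.coe_filter, Set.mem_setOf_eq, Finset.mem_product, Finset.mem_Icc]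
        rw [bval_gmap hr hB (by omega) ha2, bval_gmap hr hB (by omega) hb2, ha3, hb3]
        exact ⟨⟨⟨by omega, ha2⟩, by omega, hb2⟩, hj12, by omega⟩
      · show (bval (gmap n r B) j1, bval (gmap n r B) j2) = (x, y)
        rw [bval_gmap hr hB (by omega) ha2, bval_gmap hr hB (by omega) hb2, ha3, hb3]

lemma invB_gmap (hr : r ≤ n) (hB : B ∈ Dom n r) :
    invB (gmap n r B) = ∑ b ∈ B, fstat n r B b := by
  have hD := mem_Dom_iff.mp hB
  have e1 : ((Cset n B ×ˢ B).filter fun p => p.2 < p.1).card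
      = ∑ b ∈ B, ((Cset n B).filter fun a => b < a).card :=
    card_filter_product_right _ _ (fun a b => b < a)
  have e2 : ((Cset n B ×ˢ B).filter fun p => p.1 + p.2 < 0).card
      = ∑ b ∈ B, ((Cset n B).filter fun a => a + b < 0).card :=
    card_filter_product_right _ _ (fun a b => a + b < 0)
  have e3 : ((B ×ˢ B).filter fun p => p.1 < p.2 ∧ p.1 + p.2 < 0).card
      = ∑ b ∈ B, ((B.filter fun y => b < y ∧ b + y < 0)).card :=
    card_filter_product_left _ _ (fun x y => x < y ∧ x + y < 0)
  rw [invB, count_c1 hr hB, count_c2 hr hB, count_c3 hr hB, e1, e2, e3, Finset.card_filter]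
  simp only [← Finset.sum_add_distrib]
  refine Finset.sum_congr rfl fun b hb => ?_
  by_cases hneg : b < 0
  · simp only [fstat, if_pos hneg]
    have hb1 := hD.1 b hb
    have h1 : (Cset n B).filter (fun a => b < a) = Cset n B :=
      Finset.filter_true_of_mem (fun a ha => by have := Cset_pos ha; omega)
    have h2 : (Cset n B).filter (fun a => a + b < 0) = (Cset n B).filter (fun a => a < -b) :=
      Finset.filter_congr (fun a _ => by omega)
    have h3 : B.filter (fun y => b < y ∧ b + y < 0)
        = B.filter (fun y => (y.natAbs : ℤ) < -b) :=
      Finset.filter_congr (fun y _ => by omega)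
    have h4 : (B.filter fun y => (y.natAbs : ℤ) < -b).card
        = ((absSet B).filter fun a => a < -b).card := by
      apply Finset.card_nbij (fun y => (y.natAbs : ℤ))
      · intro y hy
        rw [Finset.mem_coe, Finset.mem_filter] at hy ⊢
        exact ⟨by simp only [absSet, Finset.mem_image]; exact ⟨y, hy.1, rfl⟩, hy.2⟩
      · intro y hy y' hy' h
        simp only [Finset.coe_filter, Set.mem_setOf_eq] at hy hy'
        exact hD.2.2 y hy.1 y' hy'.1 (Nat.cast_inj.mp h)
      · rintro a ha
        simp only [Finset.coe_filter, Set.mem_setOf_eq, absSet, Finset.mem_image] at ha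
        obtain ⟨⟨y, hy, rfl⟩, ha2⟩ := ha
        exact ⟨y, by simp only [Finset.coe_filter, Set.mem_setOf_eq]; exact ⟨hy, ha2⟩, rfl⟩
    have h5 : ((Cset n B).filter (fun a => a < -b)).card
        + ((absSet B).filter fun a => a < -b).card
        = ((Finset.Icc (1:ℤ) n).filter fun a => a < -b).card := by
      rw [← Finset.card_union_of_disjoint
          (show Disjoint ((Cset n B).filter (fun a => a < -b))
              ((absSet B).filter (fun a => a < -b)) from
            Finset.disjoint_filter_filter Finset.sdiff_disjoint),
        ← Finset.filter_union,
        show Cset n B ∪ absSet B = Finset.Icc (1:ℤ) n from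
          Finset.sdiff_union_of_subset (absSet_subset hB)]
    have h6 : ((Finset.Icc (1:ℤ) n).filter fun a => a < -b) = Finset.Icc (1:ℤ) (-b-1) := by
      ext a
      simp only [Finset.mem_filter, Finset.mem_Icc]
      omega
    have h7 : ((Finset.Icc (1:ℤ) n).filter fun a => a < -b).card = b.natAbs - 1 := by
      rw [h6, Int.card_Icc]
      omega
    rw [h1, h2, h3, h4, Cset_card hr hB]
    omega
  · simp only [fstat, if_neg hneg]
    have hz1 : (Cset n B).filter (fun a => a + b < 0) = ∅ := by
      rw [Finset.filter_eq_empty_iff]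
      intro a ha
      have := Cset_pos ha
      omega
    have hz2 : B.filter (fun y => b < y ∧ b + y < 0) = ∅ := by
      rw [Finset.filter_eq_empty_iff]
      intro y _
      omega
    rw [hz1, hz2]
    simp

lemma chain_lt {g : ℕ → ℤ} {lo hi : ℕ} (h : ∀ j, lo ≤ j → j + 1 ≤ hi → g j < g (j+1)) :
    ∀ i j, lo ≤ i → i < j → j ≤ hi → g i < g j := by
  intro i j h1
  induction j with
  | zero => intro h2 _; omega
  | succ j ih =>
      intro h2 h3
      rcases Nat.lt_or_ge i j with hc | hc
      · exact lt_trans (ih (by omega) (by omega)) (h j (by omega) (by omega))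
      · have : i = j := by omega
        subst this
        exact h i (by omega) (by omega)

lemma hmap_mem_Dom (hr : r ≤ n) (w : BG n) : hmap n r w ∈ Dom n r := by
  rw [mem_Dom_iff]
  refine ⟨?_, ?_, ?_⟩
  · rintro b hb
    rw [hmap, Finset.mem_image] at hb
    obtain ⟨j, hj, rfl⟩ := hb
    rw [Finset.mem_Icc] at hj
    exact ⟨bval_ne_zero (by omega) hj.2, bval_natAbs_le (by omega) hj.2⟩
  · rw [hmap, Finset.card_image_of_injOn, Nat.card_Icc]
    · omega
    · intro j hj j' hj' h
      simp only [Finset.coe_Icc, Set.mem_Icc] at hj hj'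
      exact bval_abs_inj (by omega) hj.2 (by omega) hj'.2 (congrArg Int.natAbs h)
  · rintro b hb b' hb' h
    rw [hmap, Finset.mem_image] at hb hb'
    obtain ⟨j, hj, rfl⟩ := hb
    obtain ⟨j', hj', rfl⟩ := hb'
    rw [Finset.mem_Icc] at hj hj'
    rw [bval_abs_inj (w := w) (by omega) hj.2 (by omega) hj'.2 h]

variable {w : BG n}

lemma bvals_hmap (hr : r ≤ n)
    (hF1 : ∀ j : ℕ, 1 ≤ j → j ≤ n - r → 0 < bval w j)
    (hF2 : ∀ j : ℕ, 1 ≤ j → j < n - r → bval w j < bval w (j + 1))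
    (hF3 : ∀ j : ℕ, n - r + 1 ≤ j → j < n → bval w j < bval w (j + 1)) :
    ∀ i : ℕ, i < n → bvals n r (hmap n r w) i = bval w (i + 1) := by
  have hBw := hmap_mem_Dom hr w
  intro i hi
  rcases Nat.lt_or_ge i (n - r) with hc | hc
  · -- first block
    have hmem : ∀ k : Fin (n - r), bval w ((k:ℕ)+1) ∈ Cset n (hmap n r w) := by
      intro k
      have hk := k.2
      have hpos := hF1 ((k:ℕ)+1) (by omega) (by omega)
      have hle := bval_natAbs_le (w := w) (j := (k:ℕ)+1) (by omega) (by omega)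
      rw [Cset, Finset.mem_sdiff, Finset.mem_Icc]
      refine ⟨⟨by omega, by omega⟩, ?_⟩
      simp only [absSet, hmap, Finset.mem_image]
      rintro ⟨b, hb, hab⟩
      obtain ⟨j', hj', rfl⟩ := hb
      rw [Finset.mem_Icc] at hj'
      have : ((k:ℕ)+1) = j' := by
        refine bval_abs_inj (w := w) (by omega) (by omega) (by omega) hj'.2 ?_
        omega
      omega
    have hmono : StrictMono (fun k : Fin (n - r) => bval w ((k:ℕ)+1)) := by
      intro k l hkl
      have hl := l.2
      exact chain_lt (lo := 1) (hi := n - r) (fun j hj1 hj2 => hF2 j hj1 (by omega)) ((k:ℕ)+1) ((l:ℕ)+1)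
        (by omega) (by omega) (by omega)
    have huniq := Finset.orderEmbOfFin_unique (bvals_cond hr hBw).1 hmem hmono
    rw [bvals_eq_C hr hBw hc, ← huniq]
  · -- second block
    have hmem : ∀ k : Fin r, bval w (n - r + 1 + (k:ℕ)) ∈ hmap n r w := by
      intro k
      have hk := k.2
      rw [hmap, Finset.mem_image]
      exact ⟨n - r + 1 + (k:ℕ), Finset.mem_Icc.mpr ⟨by omega, by omega⟩, rfl⟩
    have hmono : StrictMono (fun k : Fin r => bval w (n - r + 1 + (k:ℕ))) := by
      intro k l hkl
      have hl := l.2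
      exact chain_lt (lo := n - r + 1) (hi := n) (fun j hj1 hj2 => hF3 j hj1 (by omega)) (n - r + 1 + (k:ℕ))
        (n - r + 1 + (l:ℕ)) (by omega) (by omega) (by omega)
    have huniq := Finset.orderEmbOfFin_unique (bvals_cond hr hBw).2 hmem hmono
    rw [bvals_eq_B hr hBw hc hi, ← huniq]
    show bval w (n - r + 1 + (i - (n - r))) = bval w (i + 1)
    congr 1
    omega

lemma bval_neg_iff (w : BG n) {j : ℕ} (hj1 : 1 ≤ j) (hj2 : j ≤ n) :
    bval w j < 0 ↔ w.2 ⟨j-1, by omega⟩ = true := by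
  rw [bval, dif_pos ⟨hj1, hj2⟩]
  rcases w.2 ⟨j-1, by omega⟩ with _ | _ <;> simp <;> omega

lemma gmap_hmap (hr : r ≤ n)
    (hF1 : ∀ j : ℕ, 1 ≤ j → j ≤ n - r → 0 < bval w j)
    (hF2 : ∀ j : ℕ, 1 ≤ j → j < n - r → bval w j < bval w (j + 1))
    (hF3 : ∀ j : ℕ, n - r + 1 ≤ j → j < n → bval w j < bval w (j + 1)) :
    gmap n r (hmap n r w) = w := by
  have hBw := hmap_mem_Dom hr w
  have hb := bvals_hmap hr hF1 hF2 hF3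
  have hfin : ∀ i : Fin n, (⟨(i:ℕ) + 1 - 1, by omega⟩ : Fin n) = i :=
    fun i => Fin.ext (by show (i:ℕ)+1-1 = (i:ℕ); omega)
  refine Prod.ext ?_ ?_
  · refine Equiv.ext fun i => ?_
    show toPerm _ i = w.1 i
    rw [toPerm_apply (gmap_bijective hr hBw)]
    have h1 := bval_natAbs (w := w) (j := (i:ℕ)+1) (by omega) (by omega)
    rw [hfin i] at h1
    have h2 : (bvals n r (hmap n r w) (i:ℕ)).natAbs = (w.1 i : ℕ) + 1 := by
      rw [hb (i:ℕ) i.2, h1]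
    rw [dif_pos (by omega)]
    exact Fin.ext (by simp only [h2]; omega)
  · funext i
    show decide (bvals n r (hmap n r w) (i:ℕ) < 0) = w.2 i
    rw [hb (i:ℕ) i.2]
    have hiff := bval_neg_iff w (j := (i:ℕ)+1) (by omega) (by omega)
    rw [hfin i] at hiff
    rcases hw : w.2 i with _ | _
    · simp only [decide_eq_false_iff_not]
      rw [hiff, hw]
      simp
    · simp only [decide_eq_true_eq]
      rw [hiff, hw]

lemma qInt_ne_zero (k : ℕ) : qInt (k+1) qv ≠ 0 := by
  have heq : qInt (k+1) qv
      = algebraMap (Polynomial ℚ) Kq (∑ i ∈ range (k+1), Polynomial.X ^ i) := by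
    rw [qInt, map_sum]
    exact Finset.sum_congr rfl fun i _ => by rw [map_pow, RatFunc.algebraMap_X, qv]
  rw [heq]
  intro h
  have hinj : Function.Injective (algebraMap (Polynomial ℚ) Kq) :=
    IsFractionRing.injective _ _
  have h0 : (∑ i ∈ range (k+1), (Polynomial.X : Polynomial ℚ) ^ i) = 0 :=
    hinj (by rw [h, map_zero])
  have := congrArg (Polynomial.eval 1) h0
  simp [Polynomial.eval_finset_sum] at this
  have h2 : ((k:ℚ)+1) ≠ 0 := by positivity
  exact h2 this

lemma qFact_ne_zero (k : ℕ) : qFact k qv ≠ 0 := by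
  rw [qFact]
  exact Finset.prod_ne_zero_iff.mpr fun i _ => qInt_ne_zero i

end PartOne

theorem inv_typeB_over_increasing_runs (n r : ℕ) (hn : 1 ≤ n) (hr : r ≤ n) :
    ∑ w ∈ (univ.filter fun w : BG n =>
        (∀ j : ℕ, 1 ≤ j → j ≤ n - r → 0 < bval w j) ∧
        (∀ j : ℕ, 1 ≤ j → j < n - r → bval w j < bval w (j + 1)) ∧
        (∀ j : ℕ, n - r + 1 ≤ j → j < n → bval w j < bval w (j + 1))),
      qv ^ invB w
    = qBinom n r qv * ∏ i ∈ range r, (1 + qv ^ (n - i)) := by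
  have h1 : ∑ w ∈ (univ.filter fun w : BG n =>
        (∀ j : ℕ, 1 ≤ j → j ≤ n - r → 0 < bval w j) ∧
        (∀ j : ℕ, 1 ≤ j → j < n - r → bval w j < bval w (j + 1)) ∧
        (∀ j : ℕ, n - r + 1 ≤ j → j < n → bval w j < bval w (j + 1))),
      qv ^ invB w = ∑ B ∈ Dom n r, qv ^ (∑ b ∈ B, fstat n r B b) := by
    refine Finset.sum_nbij' (fun w => hmap n r w) (fun B => gmap n r B) ?_ ?_ ?_ ?_ ?_
    · intro w _
      exact hmap_mem_Dom hr w
    · intro B hB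
      rw [Finset.mem_filter]
      exact ⟨Finset.mem_univ _, gmap_mem_F hn hr hB⟩
    · intro w hw
      rw [Finset.mem_filter] at hw
      exact gmap_hmap hr hw.2.1 hw.2.2.1 hw.2.2.2
    · intro B hB
      exact hmap_gmap hr hB
    · intro w hw
      rw [Finset.mem_filter] at hw
      have heq : gmap n r (hmap n r w) = w := gmap_hmap hr hw.2.1 hw.2.2.1 hw.2.2.2
      rw [← invB_gmap hr (hmap_mem_Dom hr w), heq]
  rw [h1, qBinom, div_mul_eq_mul_div, eq_div_iff (mul_ne_zero (qFact_ne_zero r)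
    (qFact_ne_zero (n-r)))]
  have h2 := part2 n r hr
  rw [Ssum] at h2
  linear_combination h2

end
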